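/- arXiv:1109.3367 — 2 statements merged into one kernel-verified Lean document; each statement's English description precedes it below -/
import Mathlib

section
/- Let G = (V, E) be a graph with V = {1,…,n}, let (y_e) and (z_e) pick the two endpoints of each edge e, let s = (n+4)³, R = R_{n+4}, X_∅ = (V − s − n) ∪ (R − s) ∪ (R + n) ∪ (V + s + n), and X_e = {z_e − n} ∪ R ∪ {y_e + s} for each e ∈ E. Then for every e ∈ E: (X_e − s) \ X_∅ = {y_e} and (X_e + n) \ X_∅ = {z_e}. -/
/-- `Rset m = {(i-1)·m² + i² : 1 ≤ i ≤ m}` as a finite set of integers. -/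
def Rset (m : ℕ) : Finset ℤ :=
  (Finset.Icc 1 m).image fun i : ℕ => ((i : ℤ) - 1) * (m : ℤ) ^ 2 + (i : ℤ) ^ 2

/-- The translate `S + t = {s + t : s ∈ S}`. -/
def shift (S : Finset ℤ) (t : ℤ) : Finset ℤ := S.image (· + t)

/-- The shift value `s = (n+4)³` of the vertex-cover reduction. -/
def sVal (n : ℕ) : ℤ := ((n : ℤ) + 4) ^ 3

/-- `X_∅ = (V - s - n) ∪ (R - s) ∪ (R + n) ∪ (V + s + n)` where `V = {1,…,n}`
and `R = R_{n+4}`. -/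
noncomputable def Xzero (n : ℕ) : Finset ℤ :=
  shift (Finset.Icc (1 : ℤ) (n : ℤ)) (-(sVal n + n)) ∪ shift (Rset (n + 4)) (-sVal n)
    ∪ shift (Rset (n + 4)) n ∪ shift (Finset.Icc (1 : ℤ) (n : ℤ)) (sVal n + n)

/-- `X_e = {z_e - n} ∪ R ∪ {y_e + s}` for an edge `e` with endpoints `y_e`, `z_e`. -/
def Xedge (n : ℕ) (ye ze : ℤ) : Finset ℤ :=
  {ze - (n : ℤ)} ∪ Rset (n + 4) ∪ {ye + sVal n}

/-- The reduction family `(X_a)_{a ∈ A}` with `A = {∅} ∪ E`, modelled on `Option E`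
(`none` plays the role of `∅`). -/
noncomputable def Xfam (n : ℕ) {E : Type*} (y z : E → ℤ) : Option E → Finset ℤ :=
  fun a => a.elim (Xzero n) fun e => Xedge n (y e) (z e)

/-!
Since `R_{n+4} ⊆ [1, s]`, the translates `R - s` and `R + n` and the translates `V - s - n`,
`V + s + n` all miss `V = [1, n]`, so no vertex lies in `X_∅`. Shifting `X_e` by `-s` sends
`R` and `z_e - n` into `X_∅` and leaves only `y_e`; shifting by `n` sends `R` and `y_e + s`
into `X_∅` and leaves only `z_e`.
-/

lemma Finset.sdiff_eq_singleton_of_subset_insert {α : Type*} [DecidableEq α] {S X : Finset α}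
    {a : α} (hS : S ⊆ insert a X) (ha : a ∈ S) (haX : a ∉ X) : S \ X = {a} := by
  ext x
  simp only [Finset.mem_sdiff, Finset.mem_singleton]
  constructor
  · rintro ⟨hxS, hxX⟩
    simpa [hxX] using hS hxS
  · rintro rfl
    exact ⟨ha, haX⟩

lemma mem_shift {S : Finset ℤ} {t x : ℤ} : x ∈ shift S t ↔ x - t ∈ S := by
  simp only [shift, Finset.mem_image]
  constructor
  · rintro ⟨a, ha, rfl⟩
    simpa using ha
  · exact fun h => ⟨x - t, h, sub_add_cancel x t⟩

lemma shift_Xedge (n : ℕ) (ye ze t : ℤ) :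
    shift (Xedge n ye ze) t = {ze - n + t} ∪ shift (Rset (n + 4)) t ∪ {ye + sVal n + t} := by
  simp only [Xedge, shift, Finset.image_union, Finset.image_singleton]

lemma Rset_subset_Icc (m : ℕ) : Rset m ⊆ Finset.Icc 1 ((m : ℤ) ^ 3) := by
  intro x hx
  obtain ⟨i, hi, rfl⟩ := Finset.mem_image.mp hx
  obtain ⟨hi1, him⟩ := Finset.mem_Icc.mp hi
  have hi1' : (1 : ℤ) ≤ i := by exact_mod_cast hi1
  have him' : (i : ℤ) ≤ m := by exact_mod_cast him
  -- `(i - 1) m² + i² ≤ (m - 1) m² + m² = m³`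
  exact Finset.mem_Icc.mpr ⟨by nlinarith, by nlinarith⟩

lemma sVal_eq_cube (n : ℕ) : sVal n = ((n + 4 : ℕ) : ℤ) ^ 3 := by
  push_cast
  rfl

lemma not_mem_Xzero {n : ℕ} {v : ℤ} (hv : v ∈ Finset.Icc 1 (n : ℤ)) : v ∉ Xzero n := by
  obtain ⟨hv1, hvn⟩ := Finset.mem_Icc.mp hv
  have hs : sVal n = ((n + 4 : ℕ) : ℤ) ^ 3 := sVal_eq_cube n
  have hs0 : 0 ≤ sVal n := by rw [hs]; positivity
  simp only [Xzero, Finset.mem_union, mem_shift, not_or]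
  refine ⟨⟨⟨?_, fun h => ?_⟩, fun h => ?_⟩, ?_⟩
  · simp only [Finset.mem_Icc]
    omega
  · have := (Finset.mem_Icc.mp (Rset_subset_Icc _ h)).2
    omega
  · have := (Finset.mem_Icc.mp (Rset_subset_Icc _ h)).1
    omega
  · simp only [Finset.mem_Icc]
    omega

lemma shift_Rset_neg_subset_Xzero (n : ℕ) : shift (Rset (n + 4)) (-sVal n) ⊆ Xzero n := by
  intro x hx
  simp only [Xzero, Finset.mem_union]
  tauto

lemma shift_Rset_subset_Xzero (n : ℕ) : shift (Rset (n + 4)) n ⊆ Xzero n := by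
  intro x hx
  simp only [Xzero, Finset.mem_union]
  tauto

lemma sub_add_neg_sVal_mem_Xzero {n : ℕ} {v : ℤ} (hv : v ∈ Finset.Icc 1 (n : ℤ)) :
    v - n + -sVal n ∈ Xzero n := by
  simp only [Xzero, Finset.mem_union, mem_shift]
  left; left; left
  convert hv using 1
  ring

lemma add_sVal_add_mem_Xzero {n : ℕ} {v : ℤ} (hv : v ∈ Finset.Icc 1 (n : ℤ)) :
    v + sVal n + n ∈ Xzero n := by
  simp only [Xzero, Finset.mem_union, mem_shift]
  right
  convert hv using 1
  ring

theorem stmt_14_general (n : ℕ) {E : Type*} (y z : E → ℤ)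
    (hy : ∀ e, y e ∈ Finset.Icc (1 : ℤ) (n : ℤ))
    (hz : ∀ e, z e ∈ Finset.Icc (1 : ℤ) (n : ℤ))
    (e : E) :
    shift (Xedge n (y e) (z e)) (-sVal n) \ Xzero n = {y e}
      ∧ shift (Xedge n (y e) (z e)) (n : ℤ) \ Xzero n = {z e} := by
  have hys : y e + sVal n + -sVal n = y e := by ring
  have hzn : z e - n + n = z e := by ring
  constructor
  · refine Finset.sdiff_eq_singleton_of_subset_insert ?_ ?_ (not_mem_Xzero (hy e))
    · rw [shift_Xedge, hys, Finset.union_subset_iff, Finset.union_subset_iff,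
        Finset.singleton_subset_iff, Finset.singleton_subset_iff]
      exact ⟨⟨Finset.mem_insert_of_mem (sub_add_neg_sVal_mem_Xzero (hz e)),
        (shift_Rset_neg_subset_Xzero n).trans (Finset.subset_insert _ _)⟩,
        Finset.mem_insert_self _ _⟩
    · rw [shift_Xedge, hys]
      simp
  · refine Finset.sdiff_eq_singleton_of_subset_insert ?_ ?_ (not_mem_Xzero (hz e))
    · rw [shift_Xedge, hzn, Finset.union_subset_iff, Finset.union_subset_iff,
        Finset.singleton_subset_iff, Finset.singleton_subset_iff]
      exact ⟨⟨Finset.mem_insert_self _ _,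
        (shift_Rset_subset_Xzero n).trans (Finset.subset_insert _ _)⟩,
        Finset.mem_insert_of_mem (add_sVal_add_mem_Xzero (hy e))⟩
    · rw [shift_Xedge, hzn]
      simp

theorem stmt_14 (n : ℕ) (hn : 1 ≤ n) {E : Type*} (y z : E → ℤ)
    (hy : ∀ e, y e ∈ Finset.Icc (1 : ℤ) (n : ℤ))
    (hz : ∀ e, z e ∈ Finset.Icc (1 : ℤ) (n : ℤ))
    (hyz : ∀ e, y e ≠ z e) (e : E) :
    shift (Xedge n (y e) (z e)) (-sVal n) \ Xzero n = {y e}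
      ∧ shift (Xedge n (y e) (z e)) (n : ℤ) \ Xzero n = {z e} :=
  stmt_14_general n y z hy hz e
end

section
/- Let G = (V, E) be a graph with V = {1,…,n}, and let (X_a)_{a∈A} with A = {∅} ∪ E be the reduction family: s = (n+4)³, R = R_{n+4}, X_∅ = (V−s−n) ∪ (R−s) ∪ (R+n) ∪ (V+s+n), X_e = {z_e − n} ∪ R ∪ {y_e + s}. If C is a vertex cover of G, then setting t_∅ = 0, t_e = −s when y_e ∈ C, and t_e = n otherwise, we have |⋃_{a∈A} (X_a + t_a)| ≤ |X_∅| + |C|. -/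
@[simp]
lemma shift_zero (S : Finset ℤ) : shift S 0 = S := by
  simp [shift]

lemma mem_Xzero {n : ℕ} {x : ℤ} :
    x ∈ Xzero n ↔ x + (sVal n + n) ∈ Finset.Icc (1 : ℤ) n ∨ x + sVal n ∈ Rset (n + 4) ∨
      x - n ∈ Rset (n + 4) ∨ x - (sVal n + n) ∈ Finset.Icc (1 : ℤ) n := by
  simp only [Xzero, Finset.mem_union, mem_shift, sub_neg_eq_add, or_assoc]

lemma shift_Xedge_neg_sVal_subset {n : ℕ} {y z : ℤ} (hz : z ∈ Finset.Icc (1 : ℤ) n) :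
    shift (Xedge n y z) (-sVal n) ⊆ Xzero n ∪ {y} := by
  intro x hx
  simp only [mem_shift, Xedge, Finset.mem_union, Finset.mem_singleton, sub_neg_eq_add] at hx
  simp only [Finset.mem_union, mem_Xzero, Finset.mem_singleton]
  rcases hx with (hxz | hxR) | hxy
  · exact .inl (.inl (by rwa [← add_assoc, hxz, sub_add_cancel]))
  · exact .inl (.inr (.inl hxR))
  · exact .inr (add_right_cancel hxy)

lemma shift_Xedge_subset {n : ℕ} {y z : ℤ} (hy : y ∈ Finset.Icc (1 : ℤ) n) :
    shift (Xedge n y z) n ⊆ Xzero n ∪ {z} := by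
  intro x hx
  simp only [mem_shift, Xedge, Finset.mem_union, Finset.mem_singleton] at hx
  simp only [Finset.mem_union, mem_Xzero, Finset.mem_singleton]
  rcases hx with (hxz | hxR) | hxy
  · exact .inr (sub_left_inj.1 hxz)
  · exact .inl (.inr (.inr (.inl hxR)))
  · refine .inl (.inr (.inr (.inr ?_)))
    rwa [sub_add_eq_sub_sub, sub_right_comm, hxy, add_sub_cancel_right]

theorem stmt_17_general (n : ℕ) {E : Type*} [Fintype E]
    (y z : E → ℤ)
    (hy : ∀ e, y e ∈ Finset.Icc (1 : ℤ) (n : ℤ))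
    (hz : ∀ e, z e ∈ Finset.Icc (1 : ℤ) (n : ℤ))
    (C : Finset ℤ)
    (hcov : ∀ e, y e ∈ C ∨ z e ∈ C) :
    (Finset.univ.biUnion fun a : Option E =>
        shift (Xfam n y z a)
          (a.elim 0 fun e => if y e ∈ C then -sVal n else (n : ℤ))).card
      ≤ (Xzero n).card + C.card := by
  have hsub : (Finset.univ.biUnion fun a : Option E =>
      shift (Xfam n y z a)
        (a.elim 0 fun e => if y e ∈ C then -sVal n else (n : ℤ))) ⊆ Xzero n ∪ C := by
    refine Finset.biUnion_subset.2 fun a _ => ?_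
    cases a with
    | none => simp [Xfam]
    | some e =>
      simp only [Xfam, Option.elim]
      split_ifs with hyC
      · exact (shift_Xedge_neg_sVal_subset (hz e)).trans
          (Finset.union_subset_union_right (Finset.singleton_subset_iff.2 hyC))
      · exact (shift_Xedge_subset (hy e)).trans
          (Finset.union_subset_union_right
            (Finset.singleton_subset_iff.2 ((hcov e).resolve_left hyC)))
  exact (Finset.card_le_card hsub).trans (Finset.card_union_le _ _)

theorem stmt_17 (n : ℕ) (hn : 1 ≤ n) {E : Type*} [Fintype E] [DecidableEq E]
    (y z : E → ℤ)
    (hy : ∀ e, y e ∈ Finset.Icc (1 : ℤ) (n : ℤ))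
    (hz : ∀ e, z e ∈ Finset.Icc (1 : ℤ) (n : ℤ))
    (hyz : ∀ e, y e ≠ z e)
    (C : Finset ℤ) (hCV : C ⊆ Finset.Icc (1 : ℤ) (n : ℤ))
    (hcov : ∀ e, y e ∈ C ∨ z e ∈ C) :
    (Finset.univ.biUnion fun a : Option E =>
        shift (Xfam n y z a)
          (a.elim 0 fun e => if y e ∈ C then -sVal n else (n : ℤ))).card
      ≤ (Xzero n).card + C.card :=
  stmt_17_general n y z hy hz C hcov
end
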